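/- arXiv:1203.0662 — 3 statements merged into one kernel-verified Lean document; each statement's English description precedes it below -/
import Mathlib

section
/- Let M be a nontrivial cut of G containing an edge x_1x_2. Then there is no 3-cutset of G containing both x_1 and x_2. -/
/-!
Write the cut as `M = {x₁x₂, m₁, m₂}` and let `S = {x₁, x₂, z}` be a 3-cutset. A triconnected
graph on more than four vertices has no mixed cut of size two, so neither `x₁` nor `x₂` is a
vertex of `M`, and they lie on different sides `H₁ ∋ x₁`, `H₂ ∋ x₂` of `G − M`; say `z ∉ H₂`.
Every vertex of `S` has a neighbour in every component of `G − S`, so each component meets `m₁`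
or `m₂` (otherwise it would join `x₁` to `x₂` in `G − M`), and since no element of `M` meets two
components, each component `K` meets exactly one of them. The set `K ∩ H₂` can then only be left
through `x₂` and the single exit of that element, so triconnectivity makes it empty. Hence
`H₂ = {x₂}`, a trivial component of `G − M`.
-/

namespace Paper

variable {V : Type*}

/-- `S ⊆ V(G)` is a cutset of `G`: the graph `G − S` is disconnected. -/
def IsCutset (G : SimpleGraph V) (S : Set V) : Prop :=
  ¬ (G.induce (Sᶜ : Set V)).Connected

/-- A 3-cutset: a cutset of exactly 3 vertices. -/
def IsThreeCutset (G : SimpleGraph V) (S : Set V) : Prop :=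
  S.ncard = 3 ∧ IsCutset G S

/-- `G` is triconnected: at least 4 vertices and deleting any at most 2 vertices
leaves a connected graph. -/
def IsTriconnected [Fintype V] (G : SimpleGraph V) : Prop :=
  4 ≤ Fintype.card V ∧
    ∀ X : Set V, X.ncard ≤ 2 → (G.induce (Xᶜ : Set V)).Connected

/-- `x` and `y` both survive the deletion of `R` and lie in the same connected
component of `G − R`. -/
def ReachOutside (G : SimpleGraph V) (R : Set V) (x y : V) : Prop :=
  ∃ (hx : x ∈ (Rᶜ : Set V)) (hy : y ∈ (Rᶜ : Set V)),
    (G.induce (Rᶜ : Set V)).Reachable ⟨x, hx⟩ ⟨y, hy⟩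

/-- `R` splits `X`: two vertices of `X \ R` lie in different connected components
of `G − R`. -/
def Splits (G : SimpleGraph V) (R X : Set V) : Prop :=
  ∃ x ∈ X, ∃ y ∈ X, x ∉ R ∧ y ∉ R ∧ ¬ ReachOutside G R x y

/-- Two 3-cutsets are dependent iff one splits the other. -/
def Dependent (G : SimpleGraph V) (S T : Set V) : Prop :=
  Splits G S T ∨ Splits G T S

/-- The connected component of `G − R` containing `u` (empty if `u ∈ R`). -/
def compOutside (G : SimpleGraph V) (R : Set V) (u : V) : Set V :=
  {y | ReachOutside G R u y}

/-- `C` is a connected component of `G − R`. -/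
def IsCompOutside (G : SimpleGraph V) (R : Set V) (C : Set V) : Prop :=
  ∃ u, u ∉ R ∧ C = compOutside G R u

/-- The graph obtained from `G` by deleting the vertices of `A` (with all incident
edges) and the edges of `E`. -/
def DelVE (G : SimpleGraph V) (A : Set V) (E : Set (Sym2 V)) : SimpleGraph (Aᶜ : Set V) :=
  (G.deleteEdges E).induce (Aᶜ : Set V)

/-- The mixed set of vertices `A` and edges `E` disconnects `G`. -/
def CutVE (G : SimpleGraph V) (A : Set V) (E : Set (Sym2 V)) : Prop :=
  ¬ (DelVE G A E).Connected

/-- `x` and `y` survive the deletion and lie in the same connected component of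
the graph obtained by deleting the vertices of `A` and the edges of `E`. -/
def ReachVE (G : SimpleGraph V) (A : Set V) (E : Set (Sym2 V)) (x y : V) : Prop :=
  ∃ (hx : x ∈ (Aᶜ : Set V)) (hy : y ∈ (Aᶜ : Set V)),
    (DelVE G A E).Reachable ⟨x, hx⟩ ⟨y, hy⟩

/-- The connected component of `G − (A ∪ E)` containing `u`. -/
def compVE (G : SimpleGraph V) (A : Set V) (E : Set (Sym2 V)) (u : V) : Set V :=
  {y | ReachVE G A E u y}

/-- `C` is a connected component of the graph obtained from `G` by deleting the
vertices of `A` and the edges of `E`. -/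
def IsCompVE (G : SimpleGraph V) (A : Set V) (E : Set (Sym2 V)) (C : Set V) : Prop :=
  ∃ u, u ∉ A ∧ C = compVE G A E u

variable {G : SimpleGraph V} {A B D S : Set V} {E : Set (Sym2 V)}

lemma delVE_adj {a b : (Aᶜ : Set V)} :
    (DelVE G A E).Adj a b ↔ G.Adj a b ∧ s((a : V), (b : V)) ∉ E := by
  simp [DelVE]

lemma reachVE_refl {u : V} (hu : u ∉ A) : ReachVE G A E u u :=
  ⟨hu, hu, .refl _⟩

lemma ReachVE.notMem_left {u v : V} (h : ReachVE G A E u v) : u ∉ A := h.1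

lemma ReachVE.notMem_right {u v : V} (h : ReachVE G A E u v) : v ∉ A := h.2.1

lemma ReachVE.symm {u v : V} (h : ReachVE G A E u v) : ReachVE G A E v u :=
  ⟨h.2.1, h.1, h.2.2.symm⟩

lemma ReachVE.trans {u v w : V} (h : ReachVE G A E u v) (h' : ReachVE G A E v w) :
    ReachVE G A E u w :=
  ⟨h.1, h'.2.1, h.2.2.trans h'.2.2⟩

lemma reachVE_of_adj {u v : V} (h : G.Adj u v) (hu : u ∉ A) (hv : v ∉ A)
    (he : s(u, v) ∉ E) : ReachVE G A E u v :=
  ⟨hu, hv, SimpleGraph.Adj.reachable (delVE_adj.mpr ⟨h, he⟩)⟩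

lemma ReachVE.mem_of_mem {x y : V} (h : ReachVE G A E x y)
    (hD : ∀ u v, G.Adj u v → u ∉ A → v ∉ A → s(u, v) ∉ E → u ∈ D → v ∈ D)
    (hx : x ∈ D) : y ∈ D := by
  obtain ⟨_, _, hr⟩ := h
  suffices ∀ a b : (Aᶜ : Set V), (DelVE G A E).Reachable a b → (a : V) ∈ D → (b : V) ∈ D from
    this _ _ hr hx
  rintro a b ⟨w⟩
  induction w with
  | nil => exact id
  | @cons u v _ hadj _ ih =>
    have hadj := delVE_adj.mp hadj
    exact fun hu => ih (hD u v hadj.1 u.2 v.2 hadj.2 hu)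

lemma reachOutside_iff_reachVE {x y : V} : ReachOutside G S x y ↔ ReachVE G S ∅ x y := by
  simp only [ReachOutside, ReachVE, DelVE, SimpleGraph.deleteEdges_empty]

lemma reachOutside_refl {u : V} (hu : u ∉ S) : ReachOutside G S u u :=
  reachOutside_iff_reachVE.mpr (reachVE_refl hu)

lemma ReachOutside.notMem_left {u v : V} (h : ReachOutside G S u v) : u ∉ S := h.1

lemma ReachOutside.notMem_right {u v : V} (h : ReachOutside G S u v) : v ∉ S := h.2.1

lemma ReachOutside.symm {u v : V} (h : ReachOutside G S u v) : ReachOutside G S v u :=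
  reachOutside_iff_reachVE.mpr (reachOutside_iff_reachVE.mp h).symm

lemma ReachOutside.trans {u v w : V} (h : ReachOutside G S u v) (h' : ReachOutside G S v w) :
    ReachOutside G S u w :=
  reachOutside_iff_reachVE.mpr
    ((reachOutside_iff_reachVE.mp h).trans (reachOutside_iff_reachVE.mp h'))

lemma reachOutside_of_adj {u v : V} (h : G.Adj u v) (hu : u ∉ S) (hv : v ∉ S) :
    ReachOutside G S u v :=
  reachOutside_iff_reachVE.mpr (reachVE_of_adj h hu hv (Set.notMem_empty _))

lemma ReachOutside.mem_of_mem {x y : V} (h : ReachOutside G S x y)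
    (hD : ∀ u v, G.Adj u v → u ∉ S → v ∉ S → u ∈ D → v ∈ D) (hx : x ∈ D) : y ∈ D :=
  (reachOutside_iff_reachVE.mp h).mem_of_mem (fun u v huv hu hv _ => hD u v huv hu hv) hx

lemma ReachOutside.reachVE {u w : V} (h : ReachOutside G S u w)
    (havoid : ∀ v, ReachOutside G S u v → v ∉ A ∧ ∀ e ∈ E, v ∉ e) : ReachVE G A E u w := by
  have hu := h.notMem_left
  refine (h.mem_of_mem (D := {v | ReachOutside G S u v ∧ ReachVE G A E u v}) ?_
    ⟨reachOutside_refl hu, reachVE_refl (havoid u (reachOutside_refl hu)).1⟩).2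
  rintro a b hab ha hb ⟨hua, hμa⟩
  have hub := hua.trans (reachOutside_of_adj hab ha hb)
  exact ⟨hub, hμa.trans (reachVE_of_adj hab (havoid a hua).1 (havoid b hub).1
    fun he => (havoid a hua).2 _ he (Sym2.mem_mk_left a b))⟩

lemma exists_not_reachOutside (hS : IsCutset G S) {d : V} (hd : d ∉ S) :
    ∃ y, y ∉ S ∧ ¬ ReachOutside G S d y := by
  have hnp : ¬ (G.induce (Sᶜ : Set V)).Preconnected := fun hp =>
    hS ((SimpleGraph.connected_iff _).mpr ⟨hp, ⟨⟨d, hd⟩⟩⟩)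
  simp only [SimpleGraph.Preconnected, not_forall] at hnp
  obtain ⟨p, q, hpq⟩ := hnp
  by_cases hdp : ReachOutside G S d p
  · exact ⟨q, q.2, fun hdq => hpq (hdp.symm.trans hdq).2.2⟩
  · exact ⟨p, p.2, hdp⟩

def edgeExits (E : Set (Sym2 V)) (D : Set V) : Set V :=
  {v | v ∉ D ∧ ∃ u ∈ D, s(u, v) ∈ E}

def edgesMeeting (E : Set (Sym2 V)) (K : Set V) : Set (Sym2 V) :=
  {e ∈ E | ∃ v ∈ K, v ∈ e}

/-- Each exit vertex `v` comes with its own edge `s(u, v)`: `u ∈ D` and `v ∉ D` determine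
which endpoint is `v`. -/
lemma ncard_edgeExits_le [Finite V] : (edgeExits E D).ncard ≤ E.ncard := by
  have hexit : ∀ v ∈ edgeExits E D, ∃ u ∈ D, s(u, v) ∈ E := fun v hv => hv.2
  choose! u hu using hexit
  refine Set.ncard_le_ncard_of_injOn (fun v => s(u v, v)) (fun v hv => (hu v hv).2) ?_
  intro v hv w hw hvw
  rcases Sym2.eq_iff.mp hvw with ⟨-, h⟩ | ⟨h, -⟩
  · exact h
  · exact absurd (h ▸ (hu v hv).1) hw.1

lemma mem_union_edgeExits_of_adj {p u v : V} (hu : u ∈ compVE G A E p) (huv : G.Adj u v)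
    (hv : v ∉ compVE G A E p) : v ∈ A ∪ edgeExits E (compVE G A E p) := by
  by_contra h
  simp only [Set.mem_union, not_or] at h
  have hE : s(u, v) ∉ E := fun he => h.2 ⟨hv, u, hu, he⟩
  exact hv (ReachVE.trans hu (reachVE_of_adj huv hu.notMem_right h.1 hE))

section Triconnected

variable [Fintype V]

lemma IsTriconnected.compl_subset_of_adj (htri : IsTriconnected G) (hB : B.ncard ≤ 2)
    {d : V} (hd : d ∈ D) (hdB : d ∉ B) (hD : ∀ u ∈ D, ∀ v, G.Adj u v → v ∉ B → v ∈ D) :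
    Bᶜ ⊆ D := fun _ hy =>
  ReachOutside.mem_of_mem ⟨hdB, hy, (htri.2 B hB).preconnected _ _⟩
    (fun u v huv _ hv hu => hD u hu v huv hv) hd

lemma IsTriconnected.exists_adj_reachOutside (htri : IsTriconnected G) (hS : S.ncard ≤ 3)
    {s k y : V} (hs : s ∈ S) (hk : k ∉ S) (hy : y ∉ S) (hky : ¬ ReachOutside G S k y) :
    ∃ u, G.Adj s u ∧ ReachOutside G S k u := by
  by_contra! hno
  have hB : (S \ {s}).ncard ≤ 2 := by rw [Set.ncard_sdiff_singleton_of_mem hs]; omega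
  have hnotMem : ∀ {v}, v ∉ S → v ∉ S \ {s} := fun hv h => hv h.1
  refine hky (htri.compl_subset_of_adj hB (D := {v | ReachOutside G S k v})
    (reachOutside_refl hk) (hnotMem hk) ?_ (hnotMem hy))
  intro u hku v huv hv
  by_cases hvS : v ∈ S
  · obtain rfl : v = s := by by_contra h; exact hv ⟨hvS, h⟩
    exact absurd hku (hno u huv.symm)
  · exact hku.trans (reachOutside_of_adj huv hku.notMem_right hvS)

/-- Each side of a separation would have at most two vertices outside it, so there would be
at most four vertices. -/
lemma IsTriconnected.reachVE (htri : IsTriconnected G) (hV : 4 < Fintype.card V)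
    (hAE : A.ncard + E.ncard ≤ 2) {p q : V} (hp : p ∉ A) (hq : q ∉ A) :
    ReachVE G A E p q := by
  by_contra hpq
  let B := fun p => A ∪ edgeExits E (compVE G A E p)
  have hB : ∀ p, (B p).ncard ≤ A.ncard + E.ncard := fun p =>
    (Set.ncard_union_le _ _).trans (Nat.add_le_add_left ncard_edgeExits_le _)
  have hcover : ∀ p, p ∉ A → (B p)ᶜ ⊆ compVE G A E p := by
    intro p hp
    refine htri.compl_subset_of_adj ((hB p).trans hAE) (reachVE_refl hp) ?_ ?_
    · rintro (h | ⟨h, -⟩)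
      exacts [hp h, h (reachVE_refl hp)]
    · intro u hu v huv hvB
      by_contra hv
      exact hvB (mem_union_edgeExits_of_adj hu huv hv)
  have huniv : (Set.univ : Set V) ⊆ B p ∪ B q := by
    intro v _
    by_contra hv
    simp only [Set.mem_union, not_or] at hv
    exact hpq ((hcover p hp hv.1).trans (hcover q hq hv.2).symm)
  have hcard := Set.ncard_le_ncard huniv
  rw [Set.ncard_univ, Nat.card_eq_fintype_card] at hcard
  have := Set.ncard_union_le (B p) (B q)
  have := hB p
  have := hB q
  omega

lemma IsTriconnected.connected_delVE (htri : IsTriconnected G) (hV : 4 < Fintype.card V)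
    (hAE : A.ncard + E.ncard ≤ 2) : (DelVE G A E).Connected := by
  obtain ⟨v, hv⟩ : ∃ v, v ∉ A := by
    by_contra! h
    have := Set.ncard_le_ncard (fun v (_ : v ∈ Set.univ) => h v)
    rw [Set.ncard_univ, Nat.card_eq_fintype_card] at this
    omega
  exact (SimpleGraph.connected_iff _).mpr
    ⟨fun a b => (htri.reachVE hV hAE a.2 b.2).2.2, ⟨⟨v, hv⟩⟩⟩

lemma IsTriconnected.reachVE_of_compOutside (htri : IsTriconnected G) (hS : S.ncard ≤ 3)
    {x₁ x₂ y d : V} (hx₁S : x₁ ∈ S) (hx₂S : x₂ ∈ S) (hx₁A : x₁ ∉ A) (hx₂A : x₂ ∉ A)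
    (hy : y ∉ S) (hd : d ∉ S) (hyd : ¬ ReachOutside G S y d)
    (hA : A ∩ compOutside G S y = ∅) (hE : edgesMeeting E (compOutside G S y) = ∅) :
    ReachVE G A E x₁ x₂ := by
  have havoid : ∀ v ∈ compOutside G S y, v ∉ A ∧ ∀ e ∈ E, v ∉ e := fun v hv =>
    ⟨fun hvA => (hA.subset ⟨hvA, hv⟩ : v ∈ (∅ : Set V)),
      fun e he hve => (hE.subset ⟨he, v, hv, hve⟩ : e ∈ (∅ : Set (Sym2 V)))⟩
  obtain ⟨u, hx₁u, hyu⟩ := htri.exists_adj_reachOutside hS hx₁S hy hd hyd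
  obtain ⟨w, hx₂w, hyw⟩ := htri.exists_adj_reachOutside hS hx₂S hy hd hyd
  have hu := havoid u hyu
  have hw := havoid w hyw
  have huw : ReachVE G A E u w :=
    (hyu.symm.trans hyw).reachVE fun v huv => havoid v (hyu.trans huv)
  exact (reachVE_of_adj hx₁u hx₁A hu.1 fun he => hu.2 _ he (Sym2.mem_mk_right _ _)).trans
    (huw.trans (reachVE_of_adj hx₂w hx₂A hw.1 fun he => hw.2 _ he (Sym2.mem_mk_right _ _)).symm)

end Triconnected

lemma edgesMeeting_subset_diff {x₁ x₂ : V} (hx₁S : x₁ ∈ S) (hx₂S : x₂ ∈ S) {d : V} :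
    edgesMeeting E (compOutside G S d) ⊆ E \ {s(x₁, x₂)} := by
  rintro e ⟨he, v, hv, hve⟩
  refine ⟨he, fun h => hv.notMem_right ?_⟩
  rw [Set.mem_singleton_iff.mp h, Sym2.mem_iff] at hve
  rcases hve with rfl | rfl
  exacts [hx₁S, hx₂S]

/-- Two components of `G − S` share no vertex of `A` and no edge of `E`, and the second one
meets one of the two elements of `A ∪ (E \ {x₁x₂})`. -/
lemma ncard_add_ncard_edgesMeeting_le_one [Finite V] (hEsub : E ⊆ G.edgeSet) {x₁ x₂ d y : V}
    (hcard : A.ncard + (E \ {s(x₁, x₂)}).ncard ≤ 2) (hx₁S : x₁ ∈ S) (hx₂S : x₂ ∈ S)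
    (hdy : ¬ ReachOutside G S d y)
    (htouch : (A ∩ compOutside G S y).Nonempty ∨
      (edgesMeeting E (compOutside G S y)).Nonempty) :
    (A ∩ (compOutside G S d ∪ S)).ncard + (edgesMeeting E (compOutside G S d)).ncard ≤ 1 := by
  have hsep : ∀ v, ReachOutside G S d v → ¬ ReachOutside G S y v := fun v hdv hyv =>
    hdy (hdv.trans hyv.symm)
  have hA : (A ∩ (compOutside G S d ∪ S)).ncard + (A ∩ compOutside G S y).ncard ≤ A.ncard := by
    rw [← Set.ncard_union_eq]
    · exact Set.ncard_le_ncard (Set.union_subset Set.inter_subset_left Set.inter_subset_left)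
    · rw [Set.disjoint_left]
      rintro v ⟨-, hv | hv⟩ ⟨-, hyv⟩
      exacts [hsep v hv hyv, hyv.notMem_right hv]
  have hE : (edgesMeeting E (compOutside G S d)).ncard +
      (edgesMeeting E (compOutside G S y)).ncard ≤ (E \ {s(x₁, x₂)}).ncard := by
    rw [← Set.ncard_union_eq]
    · exact Set.ncard_le_ncard (Set.union_subset (edgesMeeting_subset_diff hx₁S hx₂S)
        (edgesMeeting_subset_diff hx₁S hx₂S))
    · rw [Set.disjoint_left]
      rintro e ⟨he, u, hdu, hue⟩ ⟨-, w, hyw, hwe⟩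
      have huw : u ≠ w := by rintro rfl; exact hsep u hdu hyw
      have hadj : G.Adj u w := by
        simpa [(Sym2.mem_and_mem_iff huw).mp ⟨hue, hwe⟩] using hEsub he
      exact hsep w (hdu.trans (reachOutside_of_adj hadj hdu.notMem_right hyw.notMem_right)) hyw
  have htouch' : 1 ≤ (A ∩ compOutside G S y).ncard +
      (edgesMeeting E (compOutside G S y)).ncard := by
    rcases htouch with h | h
    · have := (Set.ncard_pos).mpr h; omega
    · have := (Set.ncard_pos).mpr h; omega
  omega

lemma ReachVE.of_diff_singleton {e : Sym2 V}
    (he : ∀ u v, s(u, v) = e → u ∉ A → v ∉ A → ReachVE G A E u v) {p q : V}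
    (h : ReachVE G A (E \ {e}) p q) : ReachVE G A E p q := by
  refine h.mem_of_mem (D := {v | ReachVE G A E p v}) ?_ (reachVE_refl h.notMem_left)
  intro u v huv hu hv hE hpu
  by_cases huvE : s(u, v) ∈ E
  · exact hpu.trans (he u v (by by_contra h; exact hE ⟨huvE, h⟩) hu hv)
  · exact hpu.trans (reachVE_of_adj huv hu hv huvE)

lemma connected_delVE_of_diff_singleton {e : Sym2 V}
    (he : ∀ u v, s(u, v) = e → u ∉ A → v ∉ A → ReachVE G A E u v)
    (h : (DelVE G A (E \ {e})).Connected) : (DelVE G A E).Connected :=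
  (SimpleGraph.connected_iff _).mpr
    ⟨fun a b => (ReachVE.of_diff_singleton he ⟨a.2, b.2, h.preconnected a b⟩).2.2, h.nonempty⟩

lemma mem_boundary_of_adj {x₂ d u v : V} (hside : ∀ v ∈ S, v ≠ x₂ → ¬ ReachVE G A E x₂ v)
    (hu : u ∈ compOutside G S d ∩ compVE G A E x₂) (huv : G.Adj u v)
    (hv : v ∉ compOutside G S d ∩ compVE G A E x₂) :
    v ∈ insert x₂ (A ∩ (compOutside G S d ∪ S) ∪ edgeExits (edgesMeeting E (compOutside G S d))
      (compOutside G S d ∩ compVE G A E x₂)) := by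
  obtain ⟨hdu, hx₂u⟩ := hu
  have hdv : v ∉ S → ReachOutside G S d v := fun hvS =>
    hdu.trans (reachOutside_of_adj huv hdu.notMem_right hvS)
  by_cases hvx₂ : v = x₂
  · exact Or.inl hvx₂
  by_cases hvA : v ∈ A
  · by_cases hvS : v ∈ S
    exacts [Or.inr (Or.inl ⟨hvA, Or.inr hvS⟩), Or.inr (Or.inl ⟨hvA, Or.inl (hdv hvS)⟩)]
  have huvE : s(u, v) ∈ E := by
    by_contra huvE
    have hx₂v : ReachVE G A E x₂ v := hx₂u.trans (reachVE_of_adj huv hx₂u.notMem_right hvA huvE)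
    by_cases hvS : v ∈ S
    exacts [hside v hvS hvx₂ hx₂v, hv ⟨hdv hvS, hx₂v⟩]
  exact Or.inr (Or.inr ⟨hv, u, ⟨hdu, hx₂u⟩, huvE, u, hdu, Sym2.mem_mk_left u v⟩)

section ThreeCutset

variable [Fintype V]

/-- The part of the side of `x₂` inside a component `K` of `G − S` could only be left through
`x₂` and the one element of `A ∪ (E \ {x₁x₂})` meeting `K`, which leaves two vertices of `S`
out of reach. -/
lemma IsThreeCutset.not_reachVE_of_notMem (hS : IsThreeCutset G S) (htri : IsTriconnected G)
    (hEsub : E ⊆ G.edgeSet) {x₁ x₂ : V} (h12 : x₁ ≠ x₂)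
    (hcard : A.ncard + (E \ {s(x₁, x₂)}).ncard ≤ 2) (hx₁S : x₁ ∈ S) (hx₂S : x₂ ∈ S)
    (hx₁A : x₁ ∉ A) (hx₂A : x₂ ∉ A) (hside : ∀ v ∈ S, v ≠ x₂ → ¬ ReachVE G A E x₂ v)
    {d : V} (hd : d ∉ S) : ¬ ReachVE G A E x₂ d := by
  intro hx₂d
  obtain ⟨y, hy, hdy⟩ := exists_not_reachOutside hS.2 hd
  have htouch : (A ∩ compOutside G S y).Nonempty ∨
      (edgesMeeting E (compOutside G S y)).Nonempty := by
    by_contra h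
    simp only [not_or, Set.not_nonempty_iff_eq_empty] at h
    exact hside x₁ hx₁S h12 (htri.reachVE_of_compOutside hS.1.le hx₁S hx₂S hx₁A hx₂A hy hd
      (fun h' => hdy h'.symm) h.1 h.2).symm
  have hcount := ncard_add_ncard_edgesMeeting_le_one hEsub hcard hx₁S hx₂S hdy htouch
  set K := compOutside G S d
  set D := K ∩ compVE G A E x₂
  set B := insert x₂ (A ∩ (K ∪ S) ∪ edgeExits (edgesMeeting E K) D)
  have hB : B.ncard ≤ 2 := calc
    B.ncard ≤ (A ∩ (K ∪ S)).ncard + (edgeExits (edgesMeeting E K) D).ncard + 1 :=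
      (Set.ncard_insert_le _ _).trans (Nat.add_le_add_right (Set.ncard_union_le _ _) 1)
    _ ≤ (A ∩ (K ∪ S)).ncard + (edgesMeeting E K).ncard + 1 := by
      gcongr; exact ncard_edgeExits_le
    _ ≤ 2 := by omega
  have hdD : d ∈ D := ⟨reachOutside_refl hd, hx₂d⟩
  have hdB : d ∉ B := by
    rintro (rfl | ⟨hdA, -⟩ | ⟨hdD', -⟩)
    exacts [hd hx₂S, hx₂d.notMem_right hdA, hdD' hdD]
  have hcover : Bᶜ ⊆ D := htri.compl_subset_of_adj hB hdD hdB fun u hu v huv hvB =>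
    by_contra fun hv => hvB (mem_boundary_of_adj hside hu huv hv)
  have hSB : S ⊆ B := fun v hv => by_contra fun hvB => (hcover hvB).1.notMem_right hv
  have := Set.ncard_le_ncard hSB
  rw [hS.1] at this
  omega

lemma IsThreeCutset.compVE_eq_singleton (hS : IsThreeCutset G S) (htri : IsTriconnected G)
    (hEsub : E ⊆ G.edgeSet) {x₁ x₂ : V} (h12 : x₁ ≠ x₂)
    (hcard : A.ncard + (E \ {s(x₁, x₂)}).ncard ≤ 2) (hx₁S : x₁ ∈ S) (hx₂S : x₂ ∈ S)
    (hx₁A : x₁ ∉ A) (hx₂A : x₂ ∉ A) (hside : ∀ v ∈ S, v ≠ x₂ → ¬ ReachVE G A E x₂ v) :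
    compVE G A E x₂ = {x₂} := by
  ext d
  refine ⟨fun hx₂d => by_contra fun hdx₂ => ?_, by rintro rfl; exact reachVE_refl hx₂A⟩
  by_cases hdS : d ∈ S
  · exact hside d hdS hdx₂ hx₂d
  · exact hS.not_reachVE_of_notMem htri hEsub h12 hcard hx₁S hx₂S hx₁A hx₂A hside hdS hx₂d

end ThreeCutset

theorem stmt_14_general [Fintype V] (G : SimpleGraph V)
    (htri : IsTriconnected G) (hbig : 6 < Fintype.card V)
    (A : Set V) (E : Set (Sym2 V))
    (hcard : A.ncard + E.ncard = 3) (hEsub : E ⊆ G.edgeSet)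
    (hcut : CutVE G A E)
    (hnontriv : ∀ v : V, ¬ IsCompVE G A E {v})
    (x₁ x₂ : V) (hx : s(x₁, x₂) ∈ E) :
    ¬ ∃ S : Set V, IsThreeCutset G S ∧ x₁ ∈ S ∧ x₂ ∈ S := by
  rintro ⟨S, hS, hx₁S, hx₂S⟩
  have h12 : x₁ ≠ x₂ := (G.mem_edgeSet.mp (hEsub hx)).ne
  have hcard' : A.ncard + (E \ {s(x₁, x₂)}).ncard ≤ 2 := by
    have := (Set.ncard_pos (s := E)).mpr ⟨_, hx⟩
    rw [Set.ncard_sdiff_singleton_of_mem hx]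
    omega
  -- otherwise the edge `x₁x₂` is redundant in the cut, leaving a disconnecting set of size 2
  obtain ⟨hx₁A, hx₂A, hx₁₂⟩ : x₁ ∉ A ∧ x₂ ∉ A ∧ ¬ ReachVE G A E x₁ x₂ := by
    by_contra hcon
    refine hcut (connected_delVE_of_diff_singleton ?_ (htri.connected_delVE (by omega) hcard'))
    intro u v huv hu hv
    rcases Sym2.eq_iff.mp huv with ⟨rfl, rfl⟩ | ⟨rfl, rfl⟩
    · exact by_contra fun h => hcon ⟨hu, hv, h⟩
    · exact by_contra fun h => hcon ⟨hv, hu, fun h' => h h'.symm⟩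
  obtain ⟨z, hz⟩ : ∃ z, S \ {x₁, x₂} = {z} := Set.ncard_eq_one.mp (by
    rw [Set.ncard_sdiff (Set.pair_subset hx₁S hx₂S), Set.ncard_pair h12, hS.1])
  have hmem : ∀ v ∈ S, v = x₁ ∨ v = x₂ ∨ v = z := fun v hv => by
    by_contra! h
    exact h.2.2 (Set.mem_singleton_iff.mp (hz ▸ ⟨hv, by simp [h.1, h.2.1]⟩))
  by_cases hx₂z : ReachVE G A E x₂ z
  · refine hnontriv x₁ ⟨x₁, hx₁A, (hS.compVE_eq_singleton htri hEsub h12.symm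
      (by rwa [Sym2.eq_swap]) hx₂S hx₁S hx₂A hx₁A ?_).symm⟩
    intro v hv hvx₁ hx₁v
    rcases hmem v hv with rfl | rfl | rfl
    exacts [hvx₁ rfl, hx₁₂ hx₁v, hx₁₂ (hx₁v.trans hx₂z.symm)]
  · refine hnontriv x₂ ⟨x₂, hx₂A, (hS.compVE_eq_singleton htri hEsub h12
      hcard' hx₁S hx₂S hx₁A hx₂A ?_).symm⟩
    intro v hv hvx₂ hx₂v
    rcases hmem v hv with rfl | rfl | rfl
    exacts [hx₁₂ hx₂v.symm, hvx₂ rfl, hx₂z hx₂v]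

/-- Lemma `l31`: no 3-cutset contains both endpoints of an edge of a nontrivial
cut. -/
theorem stmt_14 [Fintype V] (G : SimpleGraph V)
    (htri : IsTriconnected G) (hbig : 6 < Fintype.card V)
    (A : Set V) (E : Set (Sym2 V))
    (hcard : A.ncard + E.ncard = 3) (hEsub : E ⊆ G.edgeSet)
    (hEne : E.Nonempty) (hcut : CutVE G A E)
    (hnontriv : ∀ v : V, ¬ IsCompVE G A E {v})
    (x₁ x₂ : V) (hx : s(x₁, x₂) ∈ E) :
    ¬ ∃ S : Set V, IsThreeCutset G S ∧ x₁ ∈ S ∧ x₂ ∈ S :=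
  stmt_14_general G htri hbig A E hcard hEsub hcut hnontriv x₁ x₂ hx

end Paper
end

section
/- Let T = {x, y, z} be a 3-cutset of G such that G − T has exactly two connected components, and let xx_1, yy_1 ∈ E(G) be edges whose endpoints x_1 and y_1 lie in different connected components of G − T. Suppose T can be complemented by the edge xx_1 (i.e., {y, z, xx_1} is a cut) and also by the edge yy_1 (i.e., {x, z, yy_1} is a cut). Then T can be complemented by both edges simultaneously — i.e., {z, xx_1, yy_1} ∈ 𝔐_2(G), meaning that deleting the vertex z and the edges xx_1 and yy_1 disconnects G — if and only if the vertices x and y are not adjacent. -/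
namespace Paper

variable {V : Type*}

lemma delve_adj {G : SimpleGraph V} {A : Set V} {E : Set (Sym2 V)}
    {a b : (Aᶜ : Set V)} : (DelVE G A E).Adj a b ↔ G.Adj a b ∧ s(a.1, b.1) ∉ E := by
  simp [DelVE, SimpleGraph.deleteEdges_adj]

lemma walk_spec {G : SimpleGraph V} {A : Set V} {E : Set (Sym2 V)}
    {a b : (Aᶜ : Set V)} (h : (DelVE G A E).Reachable a b) :
    ∃ p : G.Walk a.1 b.1, (∀ w ∈ p.support, w ∉ A) ∧ ∀ e ∈ p.edges, e ∉ E := by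
  obtain ⟨q⟩ := h
  induction q with
  | @nil u =>
    exact ⟨.nil, by rintro w hw; simp at hw; subst hw; exact u.2, by simp⟩
  | @cons u v w h q ih =>
    obtain ⟨p, hp, he⟩ := ih
    obtain ⟨hadj, hedge⟩ := delve_adj.mp h
    refine ⟨.cons hadj p, ?_, ?_⟩
    · intro t ht
      rcases List.mem_cons.mp ht with rfl | ht
      · exact u.2
      · exact hp t ht
    · intro e het
      rcases List.mem_cons.mp het with rfl | het
      · exact hedge
      · exact he e het

lemma reach_of_walk {G : SimpleGraph V} {A : Set V} {E : Set (Sym2 V)}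
    {a b : V} (p : G.Walk a b) (hs : ∀ w ∈ p.support, w ∉ A)
    (he : ∀ e ∈ p.edges, e ∉ E) : ReachVE G A E a b := by
  induction p with
  | nil => exact ⟨hs _ (by simp), hs _ (by simp), .refl _⟩
  | @cons u v w h q ih =>
    obtain ⟨hv, hw, hr⟩ := ih (fun t ht => hs t (by simp [ht]))
      (fun e het => he e (by simp [het]))
    have hu : u ∈ (Aᶜ : Set V) := hs _ (by simp)
    exact ⟨hu, hw, .trans (SimpleGraph.Adj.reachable
      (delve_adj.mpr ⟨h, he _ (by simp)⟩)) hr⟩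

lemma delve_empty (G : SimpleGraph V) (T : Set V) :
    DelVE G T (∅ : Set (Sym2 V)) = G.induce (Tᶜ) := by
  simp [DelVE]

lemma walk_of_reachOutside {G : SimpleGraph V} {T : Set V} {u v : V}
    (h : ReachOutside G T u v) :
    ∃ p : G.Walk u v, ∀ w ∈ p.support, w ∉ T := by
  obtain ⟨hu, hv, hr⟩ := h
  have hr' : (DelVE G T (∅ : Set (Sym2 V))).Reachable ⟨u, hu⟩ ⟨v, hv⟩ := by
    rw [delve_empty]; exact hr
  obtain ⟨p, hp, -⟩ := walk_spec hr'
  exact ⟨p, hp⟩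

lemma reach_transfer {G : SimpleGraph V} {T A : Set V} {E : Set (Sym2 V)}
    (hAT : A ⊆ T) (hE : ∀ e ∈ E, ∃ t ∈ T, t ∈ e) {u v : V}
    (h : ReachOutside G T u v) : ReachVE G A E u v := by
  obtain ⟨p, hp⟩ := walk_of_reachOutside h
  refine reach_of_walk p (fun w hw hwA => hp w hw (hAT hwA)) ?_
  intro e hep heE
  obtain ⟨t, htT, hte⟩ := hE e heE
  obtain ⟨s, rfl⟩ := Sym2.mem_iff_exists.mp hte
  exact hp t (p.fst_mem_support_of_mem_edges hep) htT

lemma ReachOutside.symm' {G : SimpleGraph V} {R : Set V} {a b : V}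
    (h : ReachOutside G R a b) : ReachOutside G R b a := by
  obtain ⟨ha, hb, hr⟩ := h; exact ⟨hb, ha, hr.symm⟩

lemma ReachOutside.trans' {G : SimpleGraph V} {R : Set V} {a b c : V}
    (h : ReachOutside G R a b) (h' : ReachOutside G R b c) : ReachOutside G R a c := by
  obtain ⟨ha, hb, hr⟩ := h; obtain ⟨hb', hc, hr'⟩ := h'
  exact ⟨ha, hc, hr.trans hr'⟩

lemma ReachOutside.refl' {G : SimpleGraph V} {R : Set V} {a : V}
    (h : a ∈ (Rᶜ : Set V)) : ReachOutside G R a a := ⟨h, h, .refl _⟩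

lemma ReachOutside.left_mem {G : SimpleGraph V} {R : Set V} {a b : V}
    (h : ReachOutside G R a b) : a ∉ R := h.1

lemma ReachOutside.right_mem {G : SimpleGraph V} {R : Set V} {a b : V}
    (h : ReachOutside G R a b) : b ∉ R := h.2.1

lemma reachOutside_of_adj_s17 {G : SimpleGraph V} {R : Set V} {a b : V}
    (ha : a ∈ (Rᶜ : Set V)) (hb : b ∈ (Rᶜ : Set V)) (h : G.Adj a b) :
    ReachOutside G R a b :=
  ⟨ha, hb, SimpleGraph.Adj.reachable (by exact h)⟩

lemma ReachOutside.adj_extend {G : SimpleGraph V} {R : Set V} {a u v : V}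
    (h : ReachOutside G R a u) (hv : v ∉ R) (hadj : G.Adj u v) :
    ReachOutside G R a v :=
  h.trans' (reachOutside_of_adj_s17 h.right_mem hv hadj)

lemma walk_invariant {G : SimpleGraph V} {S : V → Prop} {a b : V} (p : G.Walk a b)
    (hstep : ∀ u v, G.Adj u v → s(u, v) ∈ p.edges → S u → S v) (ha : S a) : S b := by
  induction p with
  | nil => exact ha
  | @cons u v w h q ih =>
    exact ih (fun s t hst he => hstep s t hst (by simp [he]))
      (hstep _ _ h (by simp) ha)

/-- Lemma `lmk0`: a 3-cutset `{x, y, z}` with two parts, complementable by edges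
`xx₁` and `yy₁` whose ends `x₁, y₁` lie in different components, can be
complemented by both edges simultaneously iff `x` and `y` are not adjacent. -/
theorem stmt_17 [Fintype V] (G : SimpleGraph V)
    (htri : IsTriconnected G) (hbig : 6 < Fintype.card V)
    (x y z : V) (hxy : x ≠ y) (hxz : x ≠ z) (hyz : y ≠ z)
    (hT : IsThreeCutset G ({x, y, z} : Set V))
    (h2 : Nat.card (G.induce (({x, y, z} : Set V)ᶜ)).ConnectedComponent = 2)
    (x₁ y₁ : V) (hax : G.Adj x x₁) (hay : G.Adj y y₁)
    (hx₁ : x₁ ∉ ({x, y, z} : Set V)) (hy₁ : y₁ ∉ ({x, y, z} : Set V))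
    (hdiff : ¬ ReachOutside G {x, y, z} x₁ y₁)
    (hcx : CutVE G {y, z} {s(x, x₁)})
    (hcy : CutVE G {x, z} {s(y, y₁)}) :
    CutVE G {z} {s(x, x₁), s(y, y₁)} ↔ ¬ G.Adj x y := by
  classical
  have hx₁'' := hx₁
  have hy₁'' := hy₁
  simp only [Set.mem_insert_iff, Set.mem_singleton_iff, not_or] at hx₁'' hy₁''
  obtain ⟨hx₁x, hx₁y, hx₁z⟩ := hx₁''
  obtain ⟨hy₁x, hy₁y, hy₁z⟩ := hy₁''
  have hP1x₁ : ReachOutside G {x, y, z} x₁ x₁ := ReachOutside.refl' hx₁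
  have hP2y₁ : ReachOutside G {x, y, z} y₁ y₁ := ReachOutside.refl' hy₁
  have hB : ∀ u, ReachOutside G {x, y, z} x₁ u → ReachOutside G {x, y, z} y₁ u → False :=
    fun _ h1 h2' => hdiff (h1.trans' h2'.symm')
  have hcover : ∀ u, u ∉ ({x, y, z} : Set V) →
      ReachOutside G {x, y, z} x₁ u ∨ ReachOutside G {x, y, z} y₁ u := by
    intro u hu
    by_contra hcon
    push_neg at hcon
    obtain ⟨h1, h2'⟩ := hcon
    set H := G.induce (({x, y, z} : Set V)ᶜ) with hH
    obtain ⟨a, b, hab, huniv⟩ := Nat.card_eq_two_iff.mp h2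
    have hne1 : H.connectedComponentMk ⟨x₁, hx₁⟩ ≠ H.connectedComponentMk ⟨u, hu⟩ :=
      fun h => h1 ⟨hx₁, hu, SimpleGraph.ConnectedComponent.eq.mp h⟩
    have hne2 : H.connectedComponentMk ⟨y₁, hy₁⟩ ≠ H.connectedComponentMk ⟨u, hu⟩ :=
      fun h => h2' ⟨hy₁, hu, SimpleGraph.ConnectedComponent.eq.mp h⟩
    have hne3 : H.connectedComponentMk ⟨x₁, hx₁⟩ ≠ H.connectedComponentMk ⟨y₁, hy₁⟩ :=
      fun h => hdiff ⟨hx₁, hy₁, SimpleGraph.ConnectedComponent.eq.mp h⟩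
    have m1 : H.connectedComponentMk ⟨x₁, hx₁⟩ = a ∨ H.connectedComponentMk ⟨x₁, hx₁⟩ = b := by
      have : H.connectedComponentMk ⟨x₁, hx₁⟩ ∈ ({a, b} : Set H.ConnectedComponent) := by
        rw [huniv]; trivial
      simpa using this
    have m2 : H.connectedComponentMk ⟨u, hu⟩ = a ∨ H.connectedComponentMk ⟨u, hu⟩ = b := by
      have : H.connectedComponentMk ⟨u, hu⟩ ∈ ({a, b} : Set H.ConnectedComponent) := by
        rw [huniv]; trivial
      simpa using this
    have m3 : H.connectedComponentMk ⟨y₁, hy₁⟩ = a ∨ H.connectedComponentMk ⟨y₁, hy₁⟩ = b := by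
      have : H.connectedComponentMk ⟨y₁, hy₁⟩ ∈ ({a, b} : Set H.ConnectedComponent) := by
        rw [huniv]; trivial
      simpa using this
    rcases m1 with e1 | e1 <;> rcases m2 with e2 | e2 <;> rcases m3 with e3 | e3 <;>
      first
        | exact hne1 (e1.trans e2.symm)
        | exact hne3 (e1.trans e3.symm)
        | exact hne2 (e3.trans e2.symm)
  have hsubYZ : ({y, z} : Set V) ⊆ ({x, y, z} : Set V) := by
    intro t ht
    simp only [Set.mem_insert_iff, Set.mem_singleton_iff] at ht ⊢
    tauto
  have hsubXZ : ({x, z} : Set V) ⊆ ({x, y, z} : Set V) := by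
    intro t ht
    simp only [Set.mem_insert_iff, Set.mem_singleton_iff] at ht ⊢
    tauto
  have hsubZ : ({z} : Set V) ⊆ ({x, y, z} : Set V) := by
    intro t ht
    simp only [Set.mem_singleton_iff] at ht
    simp [ht]
  have hExT : ∀ e ∈ ({s(x, x₁)} : Set (Sym2 V)), ∃ t ∈ ({x, y, z} : Set V), t ∈ e := by
    intro e he
    rw [Set.mem_singleton_iff] at he
    subst he
    exact ⟨x, by simp, by simp⟩
  have hEyT : ∀ e ∈ ({s(y, y₁)} : Set (Sym2 V)), ∃ t ∈ ({x, y, z} : Set V), t ∈ e := by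
    intro e he
    rw [Set.mem_singleton_iff] at he
    subst he
    exact ⟨y, by simp, by simp⟩
  have hE2T : ∀ e ∈ ({s(x, x₁), s(y, y₁)} : Set (Sym2 V)), ∃ t ∈ ({x, y, z} : Set V), t ∈ e := by
    intro e he
    rcases Set.mem_insert_iff.mp he with rfl | he
    · exact ⟨x, by simp, by simp⟩
    · rw [Set.mem_singleton_iff] at he
      subst he
      exact ⟨y, by simp, by simp⟩
  -- x has a neighbour on the y₁-side
  have hx2 : ∃ w, ReachOutside G {x, y, z} y₁ w ∧ G.Adj x w := by
    by_contra hno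
    push_neg at hno
    have hconn := htri.2 {y, z} (le_of_eq (Set.ncard_pair hyz))
    have hx₁m : x₁ ∈ (({y, z} : Set V)ᶜ : Set V) := by simp [hx₁y, hx₁z]
    have hy₁m : y₁ ∈ (({y, z} : Set V)ᶜ : Set V) := by simp [hy₁y, hy₁z]
    have hr : (DelVE G {y, z} (∅ : Set (Sym2 V))).Reachable ⟨x₁, hx₁m⟩ ⟨y₁, hy₁m⟩ := by
      rw [delve_empty]; exact hconn.preconnected _ _
    obtain ⟨p, hp, -⟩ := walk_spec hr
    have hstep : ∀ u v, G.Adj u v → s(u, v) ∈ p.edges →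
        (ReachOutside G {x, y, z} x₁ u ∨ u = x) →
        (ReachOutside G {x, y, z} x₁ v ∨ v = x) := by
      intro u v hadj hedge hSu
      have hvs : v ∉ ({y, z} : Set V) := hp v (p.snd_mem_support_of_mem_edges hedge)
      simp only [Set.mem_insert_iff, Set.mem_singleton_iff, not_or] at hvs
      rcases hSu with h1 | hux
      · by_cases hvx : v = x
        · exact Or.inr hvx
        · have hvT : v ∉ ({x, y, z} : Set V) := by simp [hvx, hvs.1, hvs.2]
          exact Or.inl (h1.adj_extend hvT hadj)
      · have hadjx : G.Adj x v := by rw [← hux]; exact hadj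
        have hvx : v ≠ x := hadjx.ne'
        have hvT : v ∉ ({x, y, z} : Set V) := by simp [hvx, hvs.1, hvs.2]
        rcases hcover v hvT with h | h
        · exact Or.inl h
        · exact absurd hadjx (hno v h)
    rcases walk_invariant p hstep (Or.inl hP1x₁) with h | h
    · exact hdiff h
    · exact hy₁x h
  -- y has a neighbour on the x₁-side
  have hy2 : ∃ w, ReachOutside G {x, y, z} x₁ w ∧ G.Adj y w := by
    by_contra hno
    push_neg at hno
    have hconn := htri.2 {x, z} (le_of_eq (Set.ncard_pair hxz))
    have hx₁m : x₁ ∈ (({x, z} : Set V)ᶜ : Set V) := by simp [hx₁x, hx₁z]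
    have hy₁m : y₁ ∈ (({x, z} : Set V)ᶜ : Set V) := by simp [hy₁x, hy₁z]
    have hr : (DelVE G {x, z} (∅ : Set (Sym2 V))).Reachable ⟨y₁, hy₁m⟩ ⟨x₁, hx₁m⟩ := by
      rw [delve_empty]; exact hconn.preconnected _ _
    obtain ⟨p, hp, -⟩ := walk_spec hr
    have hstep : ∀ u v, G.Adj u v → s(u, v) ∈ p.edges →
        (ReachOutside G {x, y, z} y₁ u ∨ u = y) →
        (ReachOutside G {x, y, z} y₁ v ∨ v = y) := by
      intro u v hadj hedge hSu
      have hvs : v ∉ ({x, z} : Set V) := hp v (p.snd_mem_support_of_mem_edges hedge)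
      simp only [Set.mem_insert_iff, Set.mem_singleton_iff, not_or] at hvs
      rcases hSu with h1 | huy
      · by_cases hvy : v = y
        · exact Or.inr hvy
        · have hvT : v ∉ ({x, y, z} : Set V) := by simp [hvy, hvs.1, hvs.2]
          exact Or.inl (h1.adj_extend hvT hadj)
      · have hadjy : G.Adj y v := by rw [← huy]; exact hadj
        have hvy : v ≠ y := hadjy.ne'
        have hvT : v ∉ ({x, y, z} : Set V) := by simp [hvy, hvs.1, hvs.2]
        rcases hcover v hvT with h | h
        · exact absurd hadjy (hno v h)
        · exact Or.inl h
    rcases walk_invariant p hstep (Or.inl hP2y₁) with h | h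
    · exact hB x₁ hP1x₁ h
    · exact hx₁y h
  -- x has no other neighbour on the x₁-side
  have hxonly : ∀ w, G.Adj x w → ReachOutside G {x, y, z} x₁ w → w = x₁ := by
    intro w hadj hP1w
    by_contra hwx₁
    refine hcx ?_
    rw [SimpleGraph.connected_iff]
    have hxm : x ∈ (({y, z} : Set V)ᶜ : Set V) := by simp [hxy, hxz]
    refine ⟨?_, ⟨⟨x, hxm⟩⟩⟩
    have key : ∀ a : ((({y, z} : Set V))ᶜ : Set V),
        (DelVE G {y, z} {s(x, x₁)}).Reachable a ⟨x, hxm⟩ := by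
      rintro ⟨u, hu⟩
      have hu' : u ∉ ({y, z} : Set V) := hu
      simp only [Set.mem_insert_iff, Set.mem_singleton_iff, not_or] at hu'
      by_cases hux : u = x
      · subst hux; exact .refl _
      · have huT : u ∉ ({x, y, z} : Set V) := by simp [hux, hu'.1, hu'.2]
        rcases hcover u huT with h | h
        · obtain ⟨hu2, hw2, hr⟩ := reach_transfer hsubYZ hExT (h.symm'.trans' hP1w)
          refine hr.trans (SimpleGraph.Adj.reachable (delve_adj.mpr ⟨hadj.symm, ?_⟩))
          intro hmem
          rw [Set.mem_singleton_iff, Sym2.eq_iff] at hmem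
          rcases hmem with ⟨-, h1⟩ | ⟨h1, -⟩
          · exact hx₁x h1.symm
          · exact hwx₁ h1
        · obtain ⟨x₂, hP2x₂, hadjx₂⟩ := hx2
          obtain ⟨hu2, hx₂2, hr⟩ := reach_transfer hsubYZ hExT (h.symm'.trans' hP2x₂)
          refine hr.trans (SimpleGraph.Adj.reachable (delve_adj.mpr ⟨hadjx₂.symm, ?_⟩))
          intro hmem
          rw [Set.mem_singleton_iff, Sym2.eq_iff] at hmem
          rcases hmem with ⟨-, h1⟩ | ⟨h1, -⟩
          · exact hx₁x h1.symm
          · exact hB x₁ hP1x₁ (by rw [← h1]; exact hP2x₂)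
    exact fun a b => (key a).trans (key b).symm
  -- y has no other neighbour on the y₁-side
  have hyonly : ∀ w, G.Adj y w → ReachOutside G {x, y, z} y₁ w → w = y₁ := by
    intro w hadj hP2w
    by_contra hwy₁
    refine hcy ?_
    rw [SimpleGraph.connected_iff]
    have hym : y ∈ (({x, z} : Set V)ᶜ : Set V) := by simp [Ne.symm hxy, hyz]
    refine ⟨?_, ⟨⟨y, hym⟩⟩⟩
    have key : ∀ a : ((({x, z} : Set V))ᶜ : Set V),
        (DelVE G {x, z} {s(y, y₁)}).Reachable a ⟨y, hym⟩ := by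
      rintro ⟨u, hu⟩
      have hu' : u ∉ ({x, z} : Set V) := hu
      simp only [Set.mem_insert_iff, Set.mem_singleton_iff, not_or] at hu'
      by_cases huy : u = y
      · subst huy; exact .refl _
      · have huT : u ∉ ({x, y, z} : Set V) := by simp [huy, hu'.1, hu'.2]
        rcases hcover u huT with h | h
        · obtain ⟨y₂, hP1y₂, hadjy₂⟩ := hy2
          obtain ⟨hu2, hy₂2, hr⟩ := reach_transfer hsubXZ hEyT (h.symm'.trans' hP1y₂)
          refine hr.trans (SimpleGraph.Adj.reachable (delve_adj.mpr ⟨hadjy₂.symm, ?_⟩))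
          intro hmem
          rw [Set.mem_singleton_iff, Sym2.eq_iff] at hmem
          rcases hmem with ⟨-, h1⟩ | ⟨h1, -⟩
          · exact hy₁y h1.symm
          · exact hB y₁ (by rw [← h1]; exact hP1y₂) hP2y₁
        · obtain ⟨hu2, hw2, hr⟩ := reach_transfer hsubXZ hEyT (h.symm'.trans' hP2w)
          refine hr.trans (SimpleGraph.Adj.reachable (delve_adj.mpr ⟨hadj.symm, ?_⟩))
          intro hmem
          rw [Set.mem_singleton_iff, Sym2.eq_iff] at hmem
          rcases hmem with ⟨-, h1⟩ | ⟨h1, -⟩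
          · exact hy₁y h1.symm
          · exact hwy₁ h1
    exact fun a b => (key a).trans (key b).symm
  have hzm : ∀ {u : V}, u ≠ z → u ∈ (({z} : Set V)ᶜ : Set V) := fun h => by simp [h]
  constructor
  · -- the simultaneous cut implies x,y non-adjacent
    intro hcut hadjxy
    refine hcut ?_
    rw [SimpleGraph.connected_iff]
    refine ⟨?_, ⟨⟨x, hzm hxz⟩⟩⟩
    obtain ⟨y₂, hP1y₂, hadjy₂⟩ := hy2
    obtain ⟨x₂, hP2x₂, hadjx₂⟩ := hx2
    have hadjyx : (DelVE G {z} {s(x, x₁), s(y, y₁)}).Adj ⟨y, hzm hyz⟩ ⟨x, hzm hxz⟩ := by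
      refine delve_adj.mpr ⟨hadjxy.symm, ?_⟩
      intro hmem
      rcases Set.mem_insert_iff.mp hmem with h | h
      · rw [Sym2.eq_iff] at h
        rcases h with ⟨h1, -⟩ | ⟨h1, -⟩
        · exact hxy h1.symm
        · exact hx₁y h1.symm
      · rw [Set.mem_singleton_iff, Sym2.eq_iff] at h
        rcases h with ⟨-, h1⟩ | ⟨h1, -⟩
        · exact hy₁x h1.symm
        · exact hy₁y h1.symm
    have key : ∀ a : ((({z} : Set V))ᶜ : Set V),
        (DelVE G {z} {s(x, x₁), s(y, y₁)}).Reachable a ⟨x, hzm hxz⟩ := by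
      rintro ⟨u, hu⟩
      have huz : u ≠ z := by simpa using hu
      by_cases hux : u = x
      · subst hux; exact .refl _
      by_cases huy : u = y
      · subst huy; exact hadjyx.reachable
      · have huT : u ∉ ({x, y, z} : Set V) := by simp [hux, huy, huz]
        rcases hcover u huT with h | h
        · obtain ⟨hu2, hy₂2, hr⟩ := reach_transfer hsubZ hE2T (h.symm'.trans' hP1y₂)
          have hadjy₂y : (DelVE G {z} {s(x, x₁), s(y, y₁)}).Adj ⟨y₂, hy₂2⟩ ⟨y, hzm hyz⟩ := by
            refine delve_adj.mpr ⟨hadjy₂.symm, ?_⟩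
            intro hmem
            rcases Set.mem_insert_iff.mp hmem with h' | h'
            · rw [Sym2.eq_iff] at h'
              rcases h' with ⟨-, h1⟩ | ⟨-, h1⟩
              · exact hx₁y h1.symm
              · exact hxy h1.symm
            · rw [Set.mem_singleton_iff, Sym2.eq_iff] at h'
              rcases h' with ⟨h1, -⟩ | ⟨h1, -⟩
              · exact hP1y₂.right_mem (by simp [show y₂ = y from h1])
              · exact hB y₁ (by rw [← h1]; exact hP1y₂) hP2y₁
          exact hr.trans (hadjy₂y.reachable.trans hadjyx.reachable)
        · obtain ⟨hu2, hx₂2, hr⟩ := reach_transfer hsubZ hE2T (h.symm'.trans' hP2x₂)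
          have hadjx₂x : (DelVE G {z} {s(x, x₁), s(y, y₁)}).Adj ⟨x₂, hx₂2⟩ ⟨x, hzm hxz⟩ := by
            refine delve_adj.mpr ⟨hadjx₂.symm, ?_⟩
            intro hmem
            rcases Set.mem_insert_iff.mp hmem with h' | h'
            · rw [Sym2.eq_iff] at h'
              rcases h' with ⟨-, h1⟩ | ⟨h1, -⟩
              · exact hx₁x h1.symm
              · exact hB x₁ hP1x₁ (by rw [← h1]; exact hP2x₂)
            · rw [Set.mem_singleton_iff, Sym2.eq_iff] at h'
              rcases h' with ⟨-, h1⟩ | ⟨-, h1⟩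
              · exact hy₁x h1.symm
              · exact hxy h1
          exact hr.trans hadjx₂x.reachable
    exact fun a b => (key a).trans (key b).symm
  · -- non-adjacency implies the simultaneous cut
    intro hnadj hconn
    obtain ⟨p, hp, he⟩ := walk_spec (hconn.preconnected ⟨x₁, hzm hx₁z⟩ ⟨y₁, hzm hy₁z⟩)
    have hstep : ∀ u v, G.Adj u v → s(u, v) ∈ p.edges →
        (ReachOutside G {x, y, z} x₁ u ∨ u = y) →
        (ReachOutside G {x, y, z} x₁ v ∨ v = y) := by
      intro u v hadj hedge hSu
      have hvz : v ≠ z := by simpa using hp v (p.snd_mem_support_of_mem_edges hedge)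
      have hnE : s(u, v) ∉ ({s(x, x₁), s(y, y₁)} : Set (Sym2 V)) := he _ hedge
      rcases hSu with h1 | huy
      · by_cases hvy : v = y
        · exact Or.inr hvy
        by_cases hvx : v = x
        · have hadjx : G.Adj x u := by rw [← hvx]; exact hadj.symm
          have hux₁ : u = x₁ := hxonly u hadjx h1
          exact absurd (by rw [hux₁, hvx, Sym2.eq_swap]; exact Set.mem_insert _ _) hnE
        · have hvT : v ∉ ({x, y, z} : Set V) := by simp [hvx, hvy, hvz]
          exact Or.inl (h1.adj_extend hvT hadj)
      · have hadjy : G.Adj y v := by rw [← huy]; exact hadj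
        have hvy : v ≠ y := hadjy.ne'
        by_cases hvx : v = x
        · have hadjxy2 : G.Adj x y := by rw [← hvx]; exact hadjy.symm
          exact absurd hadjxy2 hnadj
        · have hvT : v ∉ ({x, y, z} : Set V) := by simp [hvx, hvy, hvz]
          rcases hcover v hvT with h | h
          · exact Or.inl h
          · have hvy₁ : v = y₁ := hyonly v hadjy h
            exact absurd (by rw [huy, hvy₁]; exact Set.mem_insert_of_mem _ rfl) hnE
    rcases walk_invariant p hstep (Or.inl hP1x₁) with h | h
    · exact hdiff h
    · exact hy₁y h


end Paper
end

section
/- Let F = (p; q_1, …, q_m) be a flower in G generated by a set 𝔖 = {S_1, …, S_n} of 3-cutsets. Then the intersection ⋂_{i=1}^{n} S_i consists of exactly one vertex, namely the center p of the flower F. -/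
namespace Paper

variable {V : Type*}

/-- `A` is a part of the decomposition of `G` by the set `𝔖` of cutsets: a
maximal set split by no member of `𝔖`. -/
def IsPart (G : SimpleGraph V) (𝔖 : Set (Set V)) (A : Set V) : Prop :=
  (∀ S ∈ 𝔖, ¬ Splits G S A) ∧
    ∀ B : Set V, A ⊆ B → (∀ S ∈ 𝔖, ¬ Splits G S B) → B = A

/-- The set `𝔖` of 3-cutsets generates the flower `(p; q 0, …, q (m-1))`:
every member of `𝔖` has the form `{q i, q j, p}` with `i`, `j` distinct and
non-neighboring in the cyclic order, and the decomposition of `G` by `𝔖`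
consists of exactly `m` parts `G_{i,i+1}` whose boundaries (the vertices lying
in some member of `𝔖`) are `{q i, q (i+1), p}`. -/
def GeneratesFlower (G : SimpleGraph V) (m : ℕ) (p : V) (q : ZMod m → V)
    (𝔖 : Set (Set V)) : Prop :=
  (∀ S ∈ 𝔖, IsThreeCutset G S ∧
    ∃ i j : ZMod m, j ≠ i ∧ j ≠ i + 1 ∧ i ≠ j + 1 ∧ S = {q i, q j, p}) ∧
  ∃ Gp : ZMod m → Set V, Function.Injective Gp ∧
    (∀ A : Set V, IsPart G 𝔖 A ↔ ∃ i : ZMod m, A = Gp i) ∧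
    (∀ i : ZMod m, Gp i ∩ ⋃₀ 𝔖 = {q i, q (i + 1), p})

/-- Lemma `lrr1`: the intersection of all cutsets of a set generating a flower
is exactly the center of the flower. -/
theorem stmt_18 [Fintype V] (G : SimpleGraph V)
    (htri : IsTriconnected G) (hbig : 6 < Fintype.card V)
    (m : ℕ) (hm : 4 ≤ m) (p : V) (q : ZMod m → V)
    (hq : Function.Injective q) (hqp : ∀ i : ZMod m, q i ≠ p)
    (𝔖 : Set (Set V)) (h𝔖ne : 𝔖.Nonempty)
    (hgen : GeneratesFlower G m p q 𝔖) :
    ⋂₀ 𝔖 = {p} := by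
  obtain ⟨hform, Gp, hGpinj, hpart, hbd⟩ := hgen
  haveI : Fact (1 < m) := ⟨by omega⟩
  have hone : (1 : ZMod m) ≠ 0 := one_ne_zero
  have hpin : ∀ S ∈ 𝔖, p ∈ S := by
    intro S hS
    obtain ⟨-, i, j, -, -, -, rfl⟩ := hform S hS
    simp
  apply Set.eq_singleton_iff_unique_mem.mpr
  constructor
  · exact fun S hS => hpin S hS
  · intro x hx
    obtain ⟨S0, hS0⟩ := h𝔖ne
    obtain ⟨-, i0, j0, -, -, -, hS0eq⟩ := hform S0 hS0
    have hxS0 : x ∈ S0 := hx S0 hS0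
    rw [hS0eq] at hxS0
    -- x = q i0 ∨ x = q j0 ∨ x = p
    rcases hxS0 with h | h | h
    rotate_right
    · exact h
    all_goals {
      exfalso
      -- x = q k for some k, and x ∈ every cutset
      obtain ⟨k, rfl⟩ : ∃ k, x = q k := ⟨_, h⟩
      -- q (k+1) is in the boundary of Gp k, hence in some cutset S1
      have hk1 : q (k + 1) ∈ ⋃₀ 𝔖 := by
        have := hbd k
        have hmem : q (k + 1) ∈ Gp k ∩ ⋃₀ 𝔖 := by
          rw [this]; simp
        exact hmem.2
      obtain ⟨S1, hS1, hqk1⟩ := hk1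
      obtain ⟨-, a, b, hba, hba1, hab1, hS1eq⟩ := hform S1 hS1
      have hxS1 : q k ∈ S1 := hx S1 hS1
      rw [hS1eq] at hxS1
      rw [hS1eq] at hqk1
      have hkab : k = a ∨ k = b := by
        rcases hxS1 with h1 | h1 | h1
        · exact Or.inl (hq h1)
        · exact Or.inr (hq h1)
        · exact absurd h1 (hqp k)
      have hk1ab : k + 1 = a ∨ k + 1 = b := by
        rcases hqk1 with h1 | h1 | h1
        · exact Or.inl (hq h1)
        · exact Or.inr (hq h1)
        · exact absurd h1 (hqp (k + 1))
      rcases hkab with rfl | rfl <;> rcases hk1ab with h1 | h1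
      · exact hone (by linear_combination h1)
      · exact hba1 h1.symm
      · exact hab1 h1.symm
      · exact hone (by linear_combination h1)
    }

end Paper
end
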